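/- Let χ₁ and χ₂ be distinct characters of E^× which are both trivial on F^×, and let π = Ps(χ₁,χ₂) be the principal series representation of GL_2(E) induced from the character of the upper triangular Borel subgroup sending (a, b; 0, d) to χ₁(a)χ₂(d). Then π is irreducible, dim Hom_{GL_2(F)}(π, 1) = 1, and dim Hom_{P(F)}(π, 1) = 3, where P(F) = {(a, b; 0, 1)} is the mirabolic subgroup of GL_2(F). In particular Hom_{P(F)}(π, 1) ≠ Hom_{GL_2(F)}(π, 1), so Ok's identity fails over finite fields. -/

import Mathlib

set_option linter.unusedSectionVars false

open Matrix Finset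

noncomputable section

namespace TestVectors

variable {E : Type*} [Field E] [Fintype E] [DecidableEq E]

/-- The space of the principal series representation `Ps(χ₁,χ₂)` of `GL_2(E)`:
functions transforming on the left under the Borel subgroup of upper triangular matrices by
the character `(a, x; 0, d) ↦ χ₁(a)χ₂(d)`. -/
def psSpace (χ₁ χ₂ : Eˣ →* ℂˣ) : Submodule ℂ (GL (Fin 2) E → ℂ) where
  carrier := {f | ∀ (B g : GL (Fin 2) E) (a d : Eˣ) (x : E),
    (B : Matrix (Fin 2) (Fin 2) E) = !![(a : E), x; 0, (d : E)] →
    f (B * g) = ((χ₁ a : ℂˣ) : ℂ) * ((χ₂ d : ℂˣ) : ℂ) * f g}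
  add_mem' := by
    intro f₁ f₂ h₁ h₂ B g a d x hB
    simp only [Pi.add_apply, h₁ B g a d x hB, h₂ B g a d x hB]
    ring
  zero_mem' := by intro B g a d x hB; simp
  smul_mem' := by
    intro c f hf B g a d x hB
    simp only [Pi.smul_apply, smul_eq_mul, hf B g a d x hB]
    ring

/-- `GL_2(E)` acts on the principal series by right translation. -/
def psRep (χ₁ χ₂ : Eˣ →* ℂˣ) : Representation ℂ (GL (Fin 2) E) ↥(psSpace χ₁ χ₂) where
  toFun g :=
    { toFun := fun f => ⟨fun x => (f : GL (Fin 2) E → ℂ) (x * g), by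
        intro B y a d z hB
        show (f : GL (Fin 2) E → ℂ) (B * y * g) = _
        rw [mul_assoc]
        exact f.2 B (y * g) a d z hB⟩
      map_add' := fun f₁ f₂ => rfl
      map_smul' := fun c f => rfl }
  map_one' := by
    apply LinearMap.ext; intro f
    exact Subtype.ext (funext fun x => by simp)
  map_mul' g h := by
    apply LinearMap.ext; intro f
    exact Subtype.ext (funext fun x => by simp [mul_assoc])

/-- Irreducibility of a representation. -/
def IsIrreducibleRep {G : Type*} [Group G] {V : Type*} [AddCommGroup V] [Module ℂ V]
    (ρ : Representation ℂ G V) : Prop :=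
  Nontrivial V ∧ ∀ S : Submodule ℂ V, (∀ g : G, ∀ v ∈ S, ρ g v ∈ S) → S = ⊥ ∨ S = ⊤

/-- The space of `S`-invariant linear forms on a representation. -/
def invariantForms {G : Type*} [Group G] {V : Type*} [AddCommGroup V] [Module ℂ V]
    (ρ : Representation ℂ G V) (S : Set G) : Submodule ℂ (V →ₗ[ℂ] ℂ) where
  carrier := {L | ∀ g ∈ S, ∀ v, L (ρ g v) = L v}
  add_mem' := by
    intro a b ha hb g hg v
    simp [ha g hg v, hb g hg v]
  zero_mem' := by intro g hg v; simp
  smul_mem' := by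
    intro c a ha g hg v
    simp [ha g hg v]

/-- The subgroup `GL_2(F)` of `σ`-fixed matrices, as a set. -/
def glF (σ₀ : E ≃+* E) : Set (GL (Fin 2) E) :=
  {g | ∀ i j : Fin 2, σ₀ ((g : Matrix (Fin 2) (Fin 2) E) i j) =
    (g : Matrix (Fin 2) (Fin 2) E) i j}

/-- The mirabolic subgroup `P(F)` of `GL_2(F)`: `σ`-fixed matrices with last row `(0,1)`. -/
def mirabF (σ₀ : E ≃+* E) : Set (GL (Fin 2) E) :=
  {g | (∀ i j : Fin 2, σ₀ ((g : Matrix (Fin 2) (Fin 2) E) i j) =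
      (g : Matrix (Fin 2) (Fin 2) E) i j) ∧
    (g : Matrix (Fin 2) (Fin 2) E) 1 0 = 0 ∧ (g : Matrix (Fin 2) (Fin 2) E) 1 1 = 1}

/-!
A function in `Ps(χ₁, χ₂)` is determined by its values on representatives of
`B \ GL₂(E) = P¹(E)`, so an `H`-invariant linear form amounts to a function `c` on `P¹(E)` with
`c (z · h) = j(z, h) * c z` for `h ∈ H`, where `j` is the automorphy factor of the induced
representation. Such a `c` is determined by one value on each `H`-orbit. Because `χ₁` and `χ₂` are
trivial on `F^×`, `j = 1` on rational points and rational `h`, so the indicator of any `H`-stable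
set of rational points qualifies. For `GL₂(F)` the only other orbit is `P¹(E) \ P¹(F)`; there the
stabiliser of `t` contains the matrices of multiplication by `μ ∈ E^×` in the `F`-basis `(t, 1)`,
on which `j = χ₂(μ) / χ₁(μ)`, so `c` vanishes there and the dimension is `1`. The mirabolic
subgroup has the three orbits `{0}`, `P¹(F) \ {0}` and `P¹(E) \ P¹(F)`, and `t ↦ χ₁(t) / χ₂(t)`
is compatible on the last one, so the dimension is `3`.

For irreducibility, average a vector `f` against `χ₂⁻¹` over the matrices `(1, x; 0, d)`. The
result is right-equivariant under them, and `w (1, 0; 0, d) = (d, 0; 0, 1) w` turns this into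
`χ₁`-equivariance at the Weyl element `w`, so the average vanishes on `B w B`, i.e. off `B`. Hence a
nonzero invariant subspace contains the basis vector supported on `B`, and its translates are all
the basis vectors.
-/

open MulChar

section FixedField

variable {K : Type*} [Field K]

abbrev fixedField (σ : K ≃+* K) : Subfield K := RingHom.eqLocusField (σ : K →+* K) (RingHom.id K)

@[simp] lemma mem_fixedField {σ : K ≃+* K} {x : K} : x ∈ fixedField σ ↔ σ x = x := Iff.rfl

lemma involutive_of_card_eq_sq [Fintype K] {q : ℕ} (hcard : Fintype.card K = q ^ 2)
    {σ : K ≃+* K} (hσ : ∀ x, σ x = x ^ q) : Function.Involutive σ := fun x => by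
  rw [hσ, hσ, ← pow_mul, ← sq, ← hcard, FiniteField.pow_card]

open Polynomial in
lemma exists_pow_ne_self_of_card_eq_sq [Fintype K] {q : ℕ} (hcard : Fintype.card K = q ^ 2) :
    ∃ x : K, x ^ q ≠ x := by
  by_contra! h
  have hq : 1 < q := by
    have := hcard ▸ Fintype.one_lt_card (α := K)
    by_contra! hq
    interval_cases q <;> simp at this
  have hroots : (Finset.univ : Finset K).val ⊆ (X ^ q - X : K[X]).roots := fun x _ => by
    simp [mem_roots (FiniteField.X_pow_card_sub_X_ne_zero K hq), h x]
  have := card_le_degree_of_subset_roots hroots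
  rw [Finset.card_univ, hcard, FiniteField.X_pow_card_sub_X_natDegree_eq K hq] at this
  nlinarith

variable {σ : K ≃+* K}

lemma ne_zero_of_apply_ne {x : K} (hx : σ x ≠ x) : x ≠ 0 :=
  fun h => hx (by simp [h])

lemma exists_eq_mul_add_of_apply_ne (hσ : Function.Involutive σ) {u : K} (hu : σ u ≠ u)
    (x : K) : ∃ c ∈ fixedField σ, ∃ e ∈ fixedField σ, x = c * u + e := by
  have hden : u - σ u ≠ 0 := sub_ne_zero.2 hu.symm
  set c := (x - σ x) / (u - σ u)
  have hc : σ c = c := by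
    rw [map_div₀, map_sub, map_sub, hσ, hσ, div_eq_div_iff (sub_ne_zero.2 hu) hden]
    ring
  refine ⟨c, hc, x - c * u, ?_, by ring⟩
  have key : x - σ x = c * (u - σ u) := (div_mul_cancel₀ _ hden).symm
  simp only [mem_fixedField, map_sub, map_mul, hc]
  linear_combination -key

end FixedField

section Characters

variable {K : Type*} [Field K]

lemma MulChar.map_div_of_field (ψ : MulChar K ℂ) (x y : K) : ψ (x / y) = ψ x / ψ y :=
  map_div₀ ψ.toMonoidWithZeroHom x y

lemma ofUnitHom_ne_zero (χ : Kˣ →* ℂˣ) {x : K} (hx : x ≠ 0) : ofUnitHom χ x ≠ 0 :=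
  apply_ne_zero_iff.2 hx.isUnit

variable {σ : K ≃+* K} {χ : Kˣ →* ℂˣ}

lemma ofUnitHom_eq_one (hχ : ∀ x : Kˣ, σ (x : K) = (x : K) → χ x = 1) {x : K}
    (hx : x ∈ fixedField σ) (hx0 : x ≠ 0) : ofUnitHom χ x = 1 := by
  rw [← Units.val_mk0 hx0, ofUnitHom_coe, hχ (Units.mk0 x hx0) hx, Units.val_one]

lemma ofUnitHom_apply_apply (hσ : Function.Involutive σ)
    (hχ : ∀ x : Kˣ, σ (x : K) = (x : K) → χ x = 1) {x : K} (hx : x ≠ 0) :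
    ofUnitHom χ (σ x) = (ofUnitHom χ x)⁻¹ := by
  have hnorm : x * σ x ∈ fixedField σ := by simp [hσ x, mul_comm]
  have h1 := ofUnitHom_eq_one hχ hnorm (mul_ne_zero hx ((map_ne_zero σ).2 hx))
  rw [map_mul] at h1
  exact (inv_eq_of_mul_eq_one_right h1).symm

end Characters

open Matrix.GeneralLinearGroup

section Bruhat

def borel (a d : Eˣ) (x : E) : GL (Fin 2) E :=
  mkOfDetNeZero !![(a : E), x; 0, (d : E)] (by simp [det_fin_two])

def lowerUnipotent (t : E) : GL (Fin 2) E :=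
  ⟨!![1, 0; t, 1], !![1, 0; -t, 1], by simp [one_fin_two], by simp [one_fin_two]⟩

def weyl : GL (Fin 2) E :=
  ⟨!![0, 1; 1, 0], !![0, 1; 1, 0], by simp [one_fin_two], by simp [one_fin_two]⟩

/-- `P¹(E)` is encoded as `Option E`, with `some t` the point `[t : 1]` and `none` the point
`[1 : 0]`. Taking the bottom row, `linePt` identifies `B \ GL₂(E)` with `P¹(E)`, and `cosetRep z`
lies in the coset of `z`. -/
def cosetRep : Option E → GL (Fin 2) E
  | some t => lowerUnipotent t
  | none => weyl

def linePt (g : GL (Fin 2) E) : Option E := if g 1 1 = 0 then none else some (g 1 0 / g 1 1)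

def borelPart (g : GL (Fin 2) E) : GL (Fin 2) E := g * (cosetRep (linePt g))⁻¹

def borelChar (χ₁ χ₂ : Eˣ →* ℂˣ) (g : GL (Fin 2) E) : ℂ :=
  ofUnitHom χ₁ (borelPart g 0 0) * ofUnitHom χ₂ (borelPart g 1 1)

def act (z : Option E) (h : GL (Fin 2) E) : Option E := linePt (cosetRep z * h)

def cocycle (χ₁ χ₂ : Eˣ →* ℂˣ) (z : Option E) (h : GL (Fin 2) E) : ℂ :=
  borelChar χ₁ χ₂ (cosetRep z * h)

variable {χ₁ χ₂ : Eˣ →* ℂˣ}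

@[simp] lemma coe_borel (a d : Eˣ) (x : E) :
    (borel a d x : Matrix (Fin 2) (Fin 2) E) = !![(a : E), x; 0, (d : E)] := rfl

@[simp] lemma coe_lowerUnipotent (t : E) :
    (lowerUnipotent t : Matrix (Fin 2) (Fin 2) E) = !![1, 0; t, 1] := rfl

@[simp] lemma coe_weyl : ((weyl : GL (Fin 2) E) : Matrix (Fin 2) (Fin 2) E) = !![0, 1; 1, 0] :=
  rfl

@[simp] lemma lowerUnipotent_inv (t : E) : (lowerUnipotent t)⁻¹ = lowerUnipotent (-t) :=
  Units.ext rfl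

@[simp] lemma weyl_inv : (weyl⁻¹ : GL (Fin 2) E) = weyl := Units.ext rfl

@[simp] lemma cosetRep_some (t : E) : cosetRep (some t) = lowerUnipotent t := rfl

@[simp] lemma cosetRep_none : cosetRep none = (weyl : GL (Fin 2) E) := rfl

@[simp] lemma lowerUnipotent_zero : lowerUnipotent 0 = (1 : GL (Fin 2) E) := by
  ext i j
  fin_cases i <;> fin_cases j <;> simp

lemma cosetRep_apply_one_zero_ne_zero {z : Option E} (hz : z ≠ some 0) : cosetRep z 1 0 ≠ 0 := by
  cases z with
  | none => simp
  | some t => simpa using hz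

variable {B C : GL (Fin 2) E}

lemma upper_apply_diag_ne_zero (hB : B 1 0 = 0) : B 0 0 ≠ 0 ∧ B 1 1 ≠ 0 := by
  have := Matrix.GeneralLinearGroup.det_ne_zero B
  rw [det_fin_two, hB, mul_zero, sub_zero] at this
  exact mul_ne_zero_iff.1 this

lemma mul_apply_one_of_upper (hB : B 1 0 = 0) (j : Fin 2) :
    (B * C : GL (Fin 2) E) 1 j = B 1 1 * C 1 j := by
  simp [Matrix.mul_apply, Fin.sum_univ_two, hB]

lemma mul_apply_zero_zero_of_upper (hC : C 1 0 = 0) :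
    (B * C : GL (Fin 2) E) 0 0 = B 0 0 * C 0 0 := by
  simp [Matrix.mul_apply, Fin.sum_univ_two, hC]

lemma borelPart_apply_one_zero (g : GL (Fin 2) E) : borelPart g 1 0 = 0 := by
  unfold borelPart linePt
  split_ifs with h
  · simp [Matrix.mul_apply, Fin.sum_univ_two, h]
  · simp only [cosetRep_some, lowerUnipotent_inv, Units.val_mul, coe_lowerUnipotent,
      Matrix.mul_apply, of_apply, cons_val', cons_val_zero, cons_val_fin_one, Fin.sum_univ_two,
      mul_one, cons_val_one, mul_neg]
    field_simp
    ring

lemma borelPart_mul_cosetRep (g : GL (Fin 2) E) : borelPart g * cosetRep (linePt g) = g :=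
  inv_mul_cancel_right g _

lemma linePt_cosetRep (z : Option E) : linePt (cosetRep z) = z := by
  cases z <;> simp [linePt]

lemma linePt_mul_of_upper (hB : B 1 0 = 0) (g : GL (Fin 2) E) : linePt (B * g) = linePt g := by
  have hB11 := (upper_apply_diag_ne_zero hB).2
  simp only [linePt, mul_apply_one_of_upper hB, mul_eq_zero, hB11, false_or,
    mul_div_mul_left _ _ hB11]

lemma borelChar_mul_of_upper (hB : B 1 0 = 0) (g : GL (Fin 2) E) :
    borelChar χ₁ χ₂ (B * g) = ofUnitHom χ₁ (B 0 0) * ofUnitHom χ₂ (B 1 1) * borelChar χ₁ χ₂ g := by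
  have hBg : borelPart (B * g) = B * borelPart g := by
    rw [borelPart, borelPart, linePt_mul_of_upper hB, mul_assoc]
  rw [borelChar, borelChar, hBg, mul_apply_zero_zero_of_upper (borelPart_apply_one_zero g),
    mul_apply_one_of_upper hB, map_mul, map_mul]
  ring

lemma borelChar_cosetRep (z : Option E) : borelChar χ₁ χ₂ (cosetRep z) = 1 := by
  simp only [borelChar, borelPart, linePt_cosetRep, mul_inv_cancel]
  simp [MulChar.map_one]

lemma borelChar_of_apply_one_one_ne_zero {g : GL (Fin 2) E} (hg : g 1 1 ≠ 0) :
    borelChar χ₁ χ₂ g =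
      ofUnitHom χ₁ ((g : Matrix (Fin 2) (Fin 2) E).det / g 1 1) * ofUnitHom χ₂ (g 1 1) := by
  simp only [borelChar, borelPart, linePt, if_neg hg, cosetRep_some, lowerUnipotent_inv,
    Units.val_mul, coe_lowerUnipotent, det_fin_two]
  congr 2
  · simp only [Matrix.mul_apply, of_apply, cons_val', cons_val_zero, cons_val_fin_one,
      Fin.sum_univ_two, mul_one, cons_val_one, mul_neg]
    field_simp
    ring
  · simp [Matrix.mul_apply, Fin.sum_univ_two]

lemma apply_mul_of_upper {f : GL (Fin 2) E → ℂ} (hf : f ∈ psSpace χ₁ χ₂) (hB : B 1 0 = 0)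
    (g : GL (Fin 2) E) :
    f (B * g) = ofUnitHom χ₁ (B 0 0) * ofUnitHom χ₂ (B 1 1) * f g := by
  obtain ⟨ha, hd⟩ := upper_apply_diag_ne_zero hB
  have h := hf B g (Units.mk0 _ ha) (Units.mk0 _ hd) (B 0 1) (by
    ext i j
    fin_cases i <;> fin_cases j <;> simp [hB])
  rwa [← ofUnitHom_coe, ← ofUnitHom_coe, Units.val_mk0, Units.val_mk0] at h

lemma apply_eq_borelChar_mul {f : GL (Fin 2) E → ℂ} (hf : f ∈ psSpace χ₁ χ₂) (g : GL (Fin 2) E) :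
    f g = borelChar χ₁ χ₂ g * f (cosetRep (linePt g)) := by
  conv_lhs => rw [← borelPart_mul_cosetRep g]
  exact apply_mul_of_upper hf (borelPart_apply_one_zero g) _

lemma linePt_mul (g h : GL (Fin 2) E) : linePt (g * h) = act (linePt g) h := by
  conv_lhs => rw [← borelPart_mul_cosetRep g, mul_assoc]
  exact linePt_mul_of_upper (borelPart_apply_one_zero g) _

lemma act_mul (z : Option E) (h₁ h₂ : GL (Fin 2) E) : act (act z h₁) h₂ = act z (h₁ * h₂) := by
  show _ = linePt (cosetRep z * (h₁ * h₂))
  rw [← mul_assoc, linePt_mul]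
  rfl

lemma act_one (z : Option E) : act z 1 = z := by
  rw [act, mul_one, linePt_cosetRep]

lemma act_bijective (h : GL (Fin 2) E) : Function.Bijective (act · h) :=
  Function.bijective_iff_has_inverse.2 ⟨(act · h⁻¹),
    fun z => by simp [act_mul, act_one], fun z => by simp [act_mul, act_one]⟩

end Bruhat

section Basis

def basisFun (χ₁ χ₂ : Eˣ →* ℂˣ) (z : Option E) (g : GL (Fin 2) E) : ℂ :=
  if linePt g = z then borelChar χ₁ χ₂ g else 0

variable {χ₁ χ₂ : Eˣ →* ℂˣ}

lemma basisFun_mem (z : Option E) : basisFun χ₁ χ₂ z ∈ psSpace χ₁ χ₂ := by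
  intro B g a d x hB
  have hB10 : B 1 0 = 0 := by rw [hB]; rfl
  have hB00 : B 0 0 = a := by rw [hB]; rfl
  have hB11 : B 1 1 = d := by rw [hB]; rfl
  simp only [basisFun, linePt_mul_of_upper hB10, borelChar_mul_of_upper hB10, hB00, hB11,
    ofUnitHom_coe]
  split_ifs <;> ring

lemma basisFun_cosetRep (y z : Option E) :
    basisFun χ₁ χ₂ y (cosetRep z) = if z = y then 1 else 0 := by
  simp only [basisFun, linePt_cosetRep, borelChar_cosetRep]

lemma sum_mul_basisFun {f : GL (Fin 2) E → ℂ} (hf : f ∈ psSpace χ₁ χ₂) (g : GL (Fin 2) E) :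
    ∑ z, f (cosetRep z) * basisFun χ₁ χ₂ z g = f g := by
  simp only [basisFun, mul_ite, mul_zero, Finset.sum_ite_eq, Finset.mem_univ, if_true]
  rw [apply_eq_borelChar_mul hf g, mul_comm]

def psEquivFun (χ₁ χ₂ : Eˣ →* ℂˣ) : psSpace χ₁ χ₂ ≃ₗ[ℂ] (Option E → ℂ) where
  toFun f z := (f : GL (Fin 2) E → ℂ) (cosetRep z)
  invFun c := ∑ z, c z • ⟨basisFun χ₁ χ₂ z, basisFun_mem z⟩
  map_add' _ _ := rfl
  map_smul' _ _ := rfl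
  left_inv f := Subtype.ext <| funext fun g => by
    simp only [Submodule.coe_sum, Submodule.coe_smul, Finset.sum_apply, Pi.smul_apply,
      smul_eq_mul]
    exact sum_mul_basisFun f.2 g
  right_inv c := funext fun y => by
    simp only [Submodule.coe_sum, Submodule.coe_smul, Finset.sum_apply, Pi.smul_apply,
      smul_eq_mul, basisFun_cosetRep, mul_ite, mul_one, mul_zero, Finset.sum_ite_eq,
      Finset.mem_univ, if_true]

def psBasis (χ₁ χ₂ : Eˣ →* ℂˣ) : Module.Basis (Option E) ℂ (psSpace χ₁ χ₂) :=
  Module.Basis.ofEquivFun (psEquivFun χ₁ χ₂)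

lemma psBasis_repr_apply (f : psSpace χ₁ χ₂) (z : Option E) :
    (psBasis χ₁ χ₂).repr f z = (f : GL (Fin 2) E → ℂ) (cosetRep z) := rfl

lemma coe_psBasis (z : Option E) :
    ((psBasis χ₁ χ₂ z : psSpace χ₁ χ₂) : GL (Fin 2) E → ℂ) = basisFun χ₁ χ₂ z := by
  funext g
  simp only [psBasis, Module.Basis.coe_ofEquivFun, psEquivFun, LinearEquiv.coe_symm_mk,
    Submodule.coe_sum, Submodule.coe_smul, Finset.sum_apply, Pi.smul_apply, smul_eq_mul,
    Pi.single_apply, ite_mul, one_mul, zero_mul, Finset.sum_ite_eq', Finset.mem_univ, if_true]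

lemma psRep_psBasis_act (h : GL (Fin 2) E) (z : Option E) :
    psRep χ₁ χ₂ h (psBasis χ₁ χ₂ (act z h)) = cocycle χ₁ χ₂ z h • psBasis χ₁ χ₂ z := by
  refine (psBasis χ₁ χ₂).ext_elem fun y => ?_
  rw [map_smul, Module.Basis.repr_self, psBasis_repr_apply, Finsupp.smul_apply,
    Finsupp.single_apply, smul_eq_mul]
  change ((psBasis χ₁ χ₂ (act z h) : psSpace χ₁ χ₂) : GL (Fin 2) E → ℂ) (cosetRep y * h) = _
  rw [coe_psBasis]
  change (if act y h = act z h then cocycle χ₁ χ₂ y h else 0) = _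
  simp only [(act_bijective h).1.eq_iff, eq_comm (a := y), mul_ite, mul_one, mul_zero]
  split_ifs with hzy
  · rw [hzy]
  · rfl

end Basis

section Invariants

def cocycleInvariants (χ₁ χ₂ : Eˣ →* ℂˣ) (S : Set (GL (Fin 2) E)) :
    Submodule ℂ (Option E → ℂ) where
  carrier := {c | ∀ h ∈ S, ∀ z, c (act z h) = cocycle χ₁ χ₂ z h * c z}
  add_mem' hc hc' h hh z := by simp [hc h hh z, hc' h hh z, mul_add]
  zero_mem' _ _ _ := by simp
  smul_mem' a c hc h hh z := by
    simp only [Pi.smul_apply, smul_eq_mul, hc h hh z]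
    ring

variable {χ₁ χ₂ : Eˣ →* ℂˣ} {S : Set (GL (Fin 2) E)}

lemma mem_invariantForms_iff {L : psSpace χ₁ χ₂ →ₗ[ℂ] ℂ} :
    L ∈ invariantForms (psRep χ₁ χ₂) S ↔
      (fun z => L (psBasis χ₁ χ₂ z)) ∈ cocycleInvariants χ₁ χ₂ S := by
  constructor
  · intro hL h hh z
    show L _ = _ * L _
    rw [← hL h hh, psRep_psBasis_act, map_smul, smul_eq_mul]
  · intro hc h hh
    suffices L ∘ₗ psRep χ₁ χ₂ h = L from LinearMap.congr_fun this
    refine (psBasis χ₁ χ₂).ext fun y => ?_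
    obtain ⟨z, rfl⟩ := (act_bijective h).2 y
    rw [LinearMap.comp_apply, psRep_psBasis_act, map_smul, smul_eq_mul]
    exact (hc h hh z).symm

lemma finrank_invariantForms :
    Module.finrank ℂ (invariantForms (psRep χ₁ χ₂) S) =
      Module.finrank ℂ (cocycleInvariants χ₁ χ₂ S) := by
  have : invariantForms (psRep χ₁ χ₂) S =
      (cocycleInvariants χ₁ χ₂ S).comap ((psBasis χ₁ χ₂).constr (M' := ℂ) ℂ).symm.toLinearMap := by
    ext L
    exact mem_invariantForms_iff
  rw [this, Submodule.comap_equiv_eq_map_symm, LinearEquiv.symm_symm,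
    LinearEquiv.finrank_map_eq]

lemma mul_eq_mul_of_mem_cocycleInvariants {c c' : Option E → ℂ}
    (hc : c ∈ cocycleInvariants χ₁ χ₂ S) (hc' : c' ∈ cocycleInvariants χ₁ χ₂ S)
    {h : GL (Fin 2) E} (hh : h ∈ S) (z : Option E) :
    c (act z h) * c' z = c' (act z h) * c z := by
  rw [hc h hh z, hc' h hh z]
  ring

end Invariants

section Rational

def glFSubgroup (σ : E ≃+* E) : Subgroup (GL (Fin 2) E) :=
  MonoidHom.eqLocus (map (σ : E →+* E)) (MonoidHom.id _)

def rationalPoints (σ : E ≃+* E) : Set (Option E) := {z | ∀ t ∈ z, σ t = t}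

variable {σ : E ≃+* E} {χ₁ χ₂ : Eˣ →* ℂˣ}

lemma mem_glFSubgroup {g : GL (Fin 2) E} : g ∈ glFSubgroup σ ↔ g ∈ glF σ := by
  change map (σ : E →+* E) g = g ↔ _
  simp [Matrix.GeneralLinearGroup.ext_iff, Matrix.GeneralLinearGroup.map_apply, glF]

@[simp] lemma none_mem_rationalPoints : none ∈ rationalPoints σ := by
  simp [rationalPoints]

@[simp] lemma some_mem_rationalPoints {t : E} : some t ∈ rationalPoints σ ↔ σ t = t := by
  simp [rationalPoints]

lemma cosetRep_mem_glFSubgroup {z : Option E} (hz : z ∈ rationalPoints σ) :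
    cosetRep z ∈ glFSubgroup σ := by
  rw [mem_glFSubgroup]
  cases z with
  | none => intro i j; fin_cases i <;> fin_cases j <;> simp
  | some t => intro i j; fin_cases i <;> fin_cases j <;> simp_all

lemma linePt_mem_rationalPoints {g : GL (Fin 2) E} (hg : g ∈ glFSubgroup σ) :
    linePt g ∈ rationalPoints σ := by
  rw [mem_glFSubgroup] at hg
  unfold linePt
  split_ifs
  · exact none_mem_rationalPoints
  · rw [some_mem_rationalPoints, map_div₀, hg, hg]

lemma borelChar_eq_one (htriv₁ : ∀ x : Eˣ, σ (x : E) = (x : E) → χ₁ x = 1)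
    (htriv₂ : ∀ x : Eˣ, σ (x : E) = (x : E) → χ₂ x = 1) {g : GL (Fin 2) E}
    (hg : g ∈ glFSubgroup σ) : borelChar χ₁ χ₂ g = 1 := by
  have hB : borelPart g ∈ glFSubgroup σ :=
    mul_mem hg (inv_mem (cosetRep_mem_glFSubgroup (linePt_mem_rationalPoints hg)))
  rw [mem_glFSubgroup] at hB
  obtain ⟨h0, h1⟩ := upper_apply_diag_ne_zero (borelPart_apply_one_zero g)
  rw [borelChar, ofUnitHom_eq_one htriv₁ (hB 0 0) h0, ofUnitHom_eq_one htriv₂ (hB 1 1) h1,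
    mul_one]

lemma act_mem_rationalPoints_iff {h : GL (Fin 2) E} (hh : h ∈ glFSubgroup σ) {z : Option E} :
    act z h ∈ rationalPoints σ ↔ z ∈ rationalPoints σ := by
  have key : ∀ {h}, h ∈ glFSubgroup σ → ∀ {z}, z ∈ rationalPoints σ →
      act z h ∈ rationalPoints σ :=
    fun hh _ hz => linePt_mem_rationalPoints (mul_mem (cosetRep_mem_glFSubgroup hz) hh)
  refine ⟨fun hz => ?_, key hh⟩
  simpa [act_mul, act_one] using key (inv_mem hh) hz

lemma indicator_mem_cocycleInvariants (htriv₁ : ∀ x : Eˣ, σ (x : E) = (x : E) → χ₁ x = 1)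
    (htriv₂ : ∀ x : Eˣ, σ (x : E) = (x : E) → χ₂ x = 1) {S : Set (GL (Fin 2) E)}
    (hS : S ⊆ glFSubgroup σ) {O : Set (Option E)} (hO : O ⊆ rationalPoints σ)
    (hOS : ∀ h ∈ S, ∀ z, act z h ∈ O ↔ z ∈ O) :
    O.indicator 1 ∈ cocycleInvariants χ₁ χ₂ S := by
  intro h hh z
  by_cases hz : z ∈ O
  · rw [Set.indicator_of_mem ((hOS h hh z).2 hz), Set.indicator_of_mem hz, cocycle,
      borelChar_eq_one htriv₁ htriv₂ (mul_mem (cosetRep_mem_glFSubgroup (hO hz)) (hS hh)),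
      one_mul, Pi.one_apply, Pi.one_apply]
  · rw [Set.indicator_of_notMem (mt (hOS h hh z).1 hz), Set.indicator_of_notMem hz, mul_zero]

end Rational

section GeneralLinear

variable {σ : E ≃+* E} {χ₁ χ₂ : Eˣ →* ℂˣ}

lemma exists_mem_glF_act_none {t : E} (ht : σ t = t) : ∃ h ∈ glF σ, act none h = some t := by
  refine ⟨mkOfDetNeZero !![t, 1; -1, 0] (by simp [det_fin_two]), ?_, ?_⟩
  · intro i j
    fin_cases i <;> fin_cases j <;> simp [ht]
  · simp [act, linePt, Matrix.mul_apply, Fin.sum_univ_two]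

lemma exists_fixed_vecMul_eq_smul (hσ : Function.Involutive σ) {t : E} (ht : σ t ≠ t) (μ : E) :
    ∃ M : Matrix (Fin 2) (Fin 2) E, (∀ i j, σ (M i j) = M i j) ∧
      ![t, 1] ᵥ* M = μ • ![t, 1] ∧ M.det = μ * σ μ := by
  -- `M` is the matrix of multiplication by `μ` in the `F`-basis `(t, 1)` of `E`.
  obtain ⟨r, hr, u, hu, hμ₁⟩ := exists_eq_mul_add_of_apply_ne hσ ht μ
  obtain ⟨p, hp, s, hs, hμ₂⟩ := exists_eq_mul_add_of_apply_ne hσ ht (μ * t)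
  rw [mem_fixedField] at hr hu hp hs
  have hσμ₁ : σ μ = r * σ t + u := by simpa [hr, hu] using congrArg σ hμ₁
  have hσμ₂ : σ μ * σ t = p * σ t + s := by simpa [hp, hs] using congrArg σ hμ₂
  have hpr : p - r * t = σ μ := by
    have : (p - r * t - σ μ) * (σ t - t) = 0 := by
      linear_combination -hσμ₂ + hμ₂ + t * (hσμ₁ - hμ₁)
    linear_combination (mul_eq_zero.1 this).resolve_right (sub_ne_zero.2 ht)
  refine ⟨!![p, r; s, u], fun i j => ?_, ?_, ?_⟩
  · fin_cases i <;> fin_cases j <;> simpa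
  · ext j
    fin_cases j <;> simp [vecMul, dotProduct, Fin.sum_univ_two]
    · linear_combination -hμ₂
    · linear_combination -hμ₁
  · rw [det_fin_two_of]
    linear_combination -p * hμ₁ + r * hμ₂ + μ * hpr

lemma exists_mem_glF_act_eq_self (hσ : Function.Involutive σ)
    (htriv₁ : ∀ x : Eˣ, σ (x : E) = (x : E) → χ₁ x = 1) {t : E} (ht : σ t ≠ t) {μ : E}
    (hμ : μ ≠ 0) : ∃ h ∈ glF σ, act (some t) h = some t ∧
      cocycle χ₁ χ₂ (some t) h = ofUnitHom χ₂ μ / ofUnitHom χ₁ μ := by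
  obtain ⟨M, hM, hvec, hdet⟩ := exists_fixed_vecMul_eq_smul hσ ht μ
  have hdet0 : M.det ≠ 0 := hdet ▸ mul_ne_zero hμ ((map_ne_zero σ).2 hμ)
  set h := mkOfDetNeZero M hdet0
  have hrow : ∀ j, (cosetRep (some t) * h : GL (Fin 2) E) 1 j = μ * ![t, 1] j := fun j => by
    have hj := congrFun hvec j
    rw [Pi.smul_apply, smul_eq_mul] at hj
    rw [← hj]
    fin_cases j <;> simp [h, Matrix.mul_apply, vecMul, dotProduct, Fin.sum_univ_two]
  have h11 : (cosetRep (some t) * h : GL (Fin 2) E) 1 1 = μ := by simpa using hrow 1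
  refine ⟨h, hM, ?_, ?_⟩
  · simp only [act, linePt, h11, if_neg hμ, hrow 0]
    simp [hμ]
  · have hdet' : (cosetRep (some t) : Matrix (Fin 2) (Fin 2) E).det *
        (h : Matrix (Fin 2) (Fin 2) E).det / μ = σ μ := by
      simp [h, hdet, hμ]
    rw [cocycle, borelChar_of_apply_one_one_ne_zero (h11 ▸ hμ), h11, Units.val_mul, det_mul,
      hdet', ofUnitHom_apply_apply hσ htriv₁ hμ, div_eq_mul_inv, mul_comm]

lemma eq_zero_of_mem_cocycleInvariants_glF (hσ : Function.Involutive σ)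
    (htriv₁ : ∀ x : Eˣ, σ (x : E) = (x : E) → χ₁ x = 1) (hne : χ₁ ≠ χ₂) {c : Option E → ℂ}
    (hc : c ∈ cocycleInvariants χ₁ χ₂ (glF σ)) {t : E} (ht : σ t ≠ t) : c (some t) = 0 := by
  obtain ⟨μ, hμ⟩ : ∃ μ : Eˣ, χ₁ μ ≠ χ₂ μ := by
    by_contra! h
    exact hne (MonoidHom.ext h)
  obtain ⟨h, hh, hact, hcoc⟩ := exists_mem_glF_act_eq_self hσ htriv₁ ht μ.ne_zero
  have hfix := hc h hh (some t)
  rw [hact, hcoc] at hfix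
  have hμ' : ofUnitHom χ₂ μ / ofUnitHom χ₁ μ ≠ 1 := by
    rw [ofUnitHom_coe, ofUnitHom_coe, Ne, div_eq_one_iff_eq (Units.ne_zero _)]
    exact fun h => hμ (Units.ext h).symm
  have : (1 - ofUnitHom χ₂ μ / ofUnitHom χ₁ μ) * c (some t) = 0 := by
    linear_combination hfix
  exact (mul_eq_zero.1 this).resolve_left (sub_ne_zero.2 hμ'.symm)

lemma cocycleInvariants_glF (hσ : Function.Involutive σ)
    (htriv₁ : ∀ x : Eˣ, σ (x : E) = (x : E) → χ₁ x = 1)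
    (htriv₂ : ∀ x : Eˣ, σ (x : E) = (x : E) → χ₂ x = 1) (hne : χ₁ ≠ χ₂) :
    cocycleInvariants χ₁ χ₂ (glF σ) = ℂ ∙ (rationalPoints σ).indicator 1 := by
  have hind : (rationalPoints σ).indicator 1 ∈ cocycleInvariants χ₁ χ₂ (glF σ) :=
    indicator_mem_cocycleInvariants htriv₁ htriv₂ (fun _ hh => mem_glFSubgroup.2 hh) le_rfl
      fun _ hh _ => act_mem_rationalPoints_iff (mem_glFSubgroup.2 hh)
  refine le_antisymm (fun c hc => Submodule.mem_span_singleton.2 ⟨c none, ?_⟩)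
    ((Submodule.span_singleton_le_iff_mem _ _).2 hind)
  funext z
  rcases z with _ | t
  · simp
  by_cases ht : σ t = t
  · obtain ⟨h, hh, hact⟩ := exists_mem_glF_act_none ht
    have := mul_eq_mul_of_mem_cocycleInvariants hc hind hh none
    simp_all
  · simp [ht, eq_zero_of_mem_cocycleInvariants_glF hσ htriv₁ hne hc ht]

lemma finrank_cocycleInvariants_glF (hσ : Function.Involutive σ)
    (htriv₁ : ∀ x : Eˣ, σ (x : E) = (x : E) → χ₁ x = 1)
    (htriv₂ : ∀ x : Eˣ, σ (x : E) = (x : E) → χ₂ x = 1) (hne : χ₁ ≠ χ₂) :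
    Module.finrank ℂ (cocycleInvariants χ₁ χ₂ (glF σ)) = 1 := by
  rw [cocycleInvariants_glF hσ htriv₁ htriv₂ hne]
  exact finrank_span_singleton fun h => by simpa using congrFun h none

end GeneralLinear

section Mirabolic

def irrationalCoeff (σ : E ≃+* E) (χ₁ χ₂ : Eˣ →* ℂˣ) : Option E → ℂ
  | none => 0
  | some t => if σ t = t then 0 else ofUnitHom χ₁ t / ofUnitHom χ₂ t

variable {σ : E ≃+* E} {χ₁ χ₂ : Eˣ →* ℂˣ}

lemma mirabF_subset_glFSubgroup : mirabF σ ⊆ glFSubgroup σ :=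
  fun _ hh => mem_glFSubgroup.2 hh.1

lemma irrationalCoeff_of_mem {z : Option E} (hz : z ∈ rationalPoints σ) :
    irrationalCoeff σ χ₁ χ₂ z = 0 := by
  rcases z with _ | t
  · rfl
  · simp_all [irrationalCoeff]

lemma cosetRep_some_mul_apply_one {h : GL (Fin 2) E} (hh : h ∈ mirabF σ) (t : E) :
    (cosetRep (some t) * h : GL (Fin 2) E) 1 0 = t * h 0 0 ∧
      (cosetRep (some t) * h : GL (Fin 2) E) 1 1 = t * h 0 1 + 1 := by
  obtain ⟨-, h10, h11⟩ := hh
  constructor <;> simp [Matrix.mul_apply, Fin.sum_univ_two, h10, h11]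

lemma act_some_of_mem_mirabF {h : GL (Fin 2) E} (hh : h ∈ mirabF σ) {t : E}
    (ht : t * h 0 1 + 1 ≠ 0) : act (some t) h = some (t * h 0 0 / (t * h 0 1 + 1)) := by
  obtain ⟨h10, h11⟩ := cosetRep_some_mul_apply_one hh t
  rw [act, linePt, h10, h11, if_neg ht]

lemma act_some_zero_of_mem_mirabF {h : GL (Fin 2) E} (hh : h ∈ mirabF σ) :
    act (some 0) h = some 0 := by
  simpa using act_some_of_mem_mirabF hh (t := 0) (by simp)

lemma act_eq_some_zero_iff_of_mem_mirabF {h : GL (Fin 2) E} (hh : h ∈ mirabF σ) (z : Option E) :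
    act z h = some 0 ↔ z = some 0 := by
  simpa only [act_some_zero_of_mem_mirabF hh] using
    (act_bijective h).1.eq_iff (a := z) (b := some 0)

lemma cocycle_some_of_mem_mirabF {h : GL (Fin 2) E} (hh : h ∈ mirabF σ) {t : E}
    (ht : t * h 0 1 + 1 ≠ 0) : cocycle χ₁ χ₂ (some t) h =
      ofUnitHom χ₁ (h 0 0 / (t * h 0 1 + 1)) * ofUnitHom χ₂ (t * h 0 1 + 1) := by
  have h11 := (cosetRep_some_mul_apply_one hh t).2
  have hdet : (h : Matrix (Fin 2) (Fin 2) E).det = h 0 0 := by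
    simp [det_fin_two, hh.2.1, hh.2.2]
  rw [cocycle, borelChar_of_apply_one_one_ne_zero (h11 ▸ ht), h11, Units.val_mul, det_mul, hdet]
  simp

lemma mul_add_one_ne_zero_of_mem_mirabF {h : GL (Fin 2) E} (hh : h ∈ mirabF σ) {t : E}
    (ht : σ t ≠ t) : t * h 0 1 + 1 ≠ 0 := by
  intro hD
  have hb : h 0 1 ≠ 0 := fun hb => by simp [hb] at hD
  apply ht
  rw [show t = -1 / h 0 1 by field_simp; linear_combination hD, map_div₀, map_neg, map_one,
    hh.1 0 1]

lemma irrationalCoeff_mem (htriv₂ : ∀ x : Eˣ, σ (x : E) = (x : E) → χ₂ x = 1) :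
    irrationalCoeff σ χ₁ χ₂ ∈ cocycleInvariants χ₁ χ₂ (mirabF σ) := by
  intro h hh z
  have hhF := mirabF_subset_glFSubgroup hh
  by_cases hz : z ∈ rationalPoints σ
  · rw [irrationalCoeff_of_mem hz, irrationalCoeff_of_mem ((act_mem_rationalPoints_iff hhF).2 hz),
      mul_zero]
  rcases z with _ | t
  · exact absurd none_mem_rationalPoints hz
  have ht : σ t ≠ t := by simpa using hz
  have ht0 := ne_zero_of_apply_ne ht
  have hD := mul_add_one_ne_zero_of_mem_mirabF hh ht
  have ha := (upper_apply_diag_ne_zero hh.2.1).1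
  have hact := act_some_of_mem_mirabF hh hD
  have hnew := (act_mem_rationalPoints_iff hhF (z := some t)).not.2 hz
  rw [hact, some_mem_rationalPoints] at hnew
  rw [hact, cocycle_some_of_mem_mirabF hh hD]
  simp only [irrationalCoeff, if_neg ht, if_neg hnew]
  have hψa : ofUnitHom χ₂ (h 0 0) = 1 := ofUnitHom_eq_one htriv₂ (hh.1 0 0) ha
  have := ofUnitHom_ne_zero χ₂ hD
  have := ofUnitHom_ne_zero χ₂ ht0
  rw [mul_div_assoc, map_mul, map_mul, MulChar.map_div_of_field (ofUnitHom χ₂), hψa]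
  field_simp

lemma borel_mem_mirabF {a : Eˣ} {b : E} (ha : σ a = a) (hb : σ b = b) : borel a 1 b ∈ mirabF σ := by
  refine ⟨fun i j => ?_, by simp, by simp⟩
  fin_cases i <;> fin_cases j <;> simp [ha, hb]

lemma exists_mem_mirabF_act_none {t : E} (ht0 : t ≠ 0) (ht : σ t = t) :
    ∃ h ∈ mirabF σ, act none h = some t :=
  ⟨borel (Units.mk0 t ht0) 1 1, borel_mem_mirabF ht (map_one σ), by
    simp [act, linePt, Matrix.mul_apply, Fin.sum_univ_two]⟩

lemma exists_mem_mirabF_act_some (hσ : Function.Involutive σ) {δ t : E} (hδ : σ δ ≠ δ)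
    (ht : σ t ≠ t) : ∃ h ∈ mirabF σ, act (some δ) h = some t := by
  have hδ0 := ne_zero_of_apply_ne hδ
  have ht0 := ne_zero_of_apply_ne ht
  -- In the coordinate `1 / z`, `(a, b; 0, 1)` acts by `w ↦ (w + b) / a`.
  have hδinv : σ δ⁻¹ ≠ δ⁻¹ := by rwa [map_inv₀, Ne, _root_.inv_inj]
  obtain ⟨c, hc, e, he, hte⟩ := exists_eq_mul_add_of_apply_ne hσ hδinv t⁻¹
  rw [mem_fixedField] at hc he
  have hc0 : c ≠ 0 := by
    rintro rfl
    apply ht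
    rw [zero_mul, zero_add] at hte
    rw [← inv_inv t, hte, map_inv₀, he]
  have key : t * (c + δ * e) = δ := by
    field_simp at hte
    linear_combination -hte
  have hmem := borel_mem_mirabF (σ := σ) (a := Units.mk0 c⁻¹ (inv_ne_zero hc0)) (b := e / c)
    (by simp [hc]) (by simp [map_div₀, hc, he])
  have hD := mul_add_one_ne_zero_of_mem_mirabF hmem hδ
  refine ⟨_, hmem, ?_⟩
  rw [act_some_of_mem_mirabF hmem hD]
  simp only [coe_borel, Units.val_mk0, of_apply, cons_val', cons_val_zero, cons_val_one,
    Option.some_inj] at hD ⊢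
  rw [eq_comm, eq_div_iff hD]
  field_simp
  linear_combination key

lemma irrationalCoeff_some_ne_zero {t : E} (ht : σ t ≠ t) :
    irrationalCoeff σ χ₁ χ₂ (some t) ≠ 0 := by
  have ht0 := ne_zero_of_apply_ne ht
  simp only [irrationalCoeff, if_neg ht]
  exact div_ne_zero (ofUnitHom_ne_zero χ₁ ht0) (ofUnitHom_ne_zero χ₂ ht0)

lemma cocycleInvariants_mirabF (hσ : Function.Involutive σ)
    (htriv₁ : ∀ x : Eˣ, σ (x : E) = (x : E) → χ₁ x = 1)
    (htriv₂ : ∀ x : Eˣ, σ (x : E) = (x : E) → χ₂ x = 1) {δ : E} (hδ : σ δ ≠ δ) :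
    cocycleInvariants χ₁ χ₂ (mirabF σ) = Submodule.span ℂ (Set.range
      ![({some 0} : Set (Option E)).indicator 1, (rationalPoints σ \ {some 0}).indicator 1,
        irrationalCoeff σ χ₁ χ₂]) := by
  have hA : ({some 0} : Set (Option E)).indicator 1 ∈ cocycleInvariants χ₁ χ₂ (mirabF σ) :=
    indicator_mem_cocycleInvariants htriv₁ htriv₂ mirabF_subset_glFSubgroup (by simp)
      fun _ hh => act_eq_some_zero_iff_of_mem_mirabF hh
  have hB : (rationalPoints σ \ {some 0}).indicator 1 ∈ cocycleInvariants χ₁ χ₂ (mirabF σ) :=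
    indicator_mem_cocycleInvariants htriv₁ htriv₂ mirabF_subset_glFSubgroup Set.sdiff_subset
      fun h hh z => by
        simp only [Set.mem_sdiff, Set.mem_singleton_iff, act_eq_some_zero_iff_of_mem_mirabF hh,
          act_mem_rationalPoints_iff (mirabF_subset_glFSubgroup hh)]
  have hC := irrationalCoeff_mem (χ₁ := χ₁) htriv₂
  refine le_antisymm (fun c hc => ?_) (Submodule.span_le.2 (Set.range_subset_iff.2 fun i => by
    fin_cases i <;> assumption))
  rw [Submodule.mem_span_range_iff_exists_fun]
  refine ⟨![c (some 0), c none, c (some δ) / irrationalCoeff σ χ₁ χ₂ (some δ)],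
    funext fun z => ?_⟩
  simp only [Fin.sum_univ_three, Finset.sum_apply, Pi.smul_apply, smul_eq_mul, cons_val_zero,
    cons_val_one, cons_val_two, head_cons, tail_cons]
  rcases z with _ | t
  · simp [irrationalCoeff]
  rcases eq_or_ne t 0 with rfl | ht0
  · simp [irrationalCoeff]
  rw [Set.indicator_of_notMem (by simpa using ht0), mul_zero, zero_add]
  by_cases ht : σ t = t
  · obtain ⟨h, hh, hact⟩ := exists_mem_mirabF_act_none ht0 ht
    have := mul_eq_mul_of_mem_cocycleInvariants hc hB hh none
    simpa [hact, ht, ht0, irrationalCoeff] using this.symm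
  · obtain ⟨h, hh, hact⟩ := exists_mem_mirabF_act_some hσ hδ ht
    have := mul_eq_mul_of_mem_cocycleInvariants hc hC hh (some δ)
    rw [hact] at this
    rw [Set.indicator_of_notMem (by simp [ht]), mul_zero, zero_add, div_mul_eq_mul_div,
      div_eq_iff (irrationalCoeff_some_ne_zero hδ)]
    linear_combination -this

lemma finrank_cocycleInvariants_mirabF (hσ : Function.Involutive σ)
    (htriv₁ : ∀ x : Eˣ, σ (x : E) = (x : E) → χ₁ x = 1)
    (htriv₂ : ∀ x : Eˣ, σ (x : E) = (x : E) → χ₂ x = 1) {δ : E} (hδ : σ δ ≠ δ) :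
    Module.finrank ℂ (cocycleInvariants χ₁ χ₂ (mirabF σ)) = 3 := by
  rw [cocycleInvariants_mirabF hσ htriv₁ htriv₂ hδ, finrank_span_eq_card, Fintype.card_fin]
  rw [Fintype.linearIndependent_iff]
  intro g hg
  have hδ0 := ne_zero_of_apply_ne hδ
  intro i
  fin_cases i
  · simpa [Fin.sum_univ_three, irrationalCoeff] using congrFun hg (some 0)
  · simpa [Fin.sum_univ_three, irrationalCoeff] using congrFun hg none
  · simpa [Fin.sum_univ_three, irrationalCoeff, hδ, hδ0, -ofUnitHom_eq, ofUnitHom_ne_zero]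
      using congrFun hg (some δ)

end Mirabolic

section Irreducible

def borelAverage (χ₂ : Eˣ →* ℂˣ) (f : GL (Fin 2) E → ℂ) (g : GL (Fin 2) E) : ℂ :=
  ∑ p : Eˣ × E, ((χ₂ p.1 : ℂˣ) : ℂ)⁻¹ * f (g * borel 1 p.1 p.2)

variable {χ₁ χ₂ : Eˣ →* ℂˣ} {f : GL (Fin 2) E → ℂ}

lemma borel_one_mul_borel_one (d d' : Eˣ) (x x' : E) :
    borel 1 d x * borel 1 d' x' = borel 1 (d * d') (x' + x * d') := by
  ext i j
  fin_cases i <;> fin_cases j <;> simp [Matrix.mul_apply, Fin.sum_univ_two]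

lemma borelAverage_mul_borel (g : GL (Fin 2) E) (d : Eˣ) (x : E) :
    borelAverage χ₂ f (g * borel 1 d x) = χ₂ d * borelAverage χ₂ f g := by
  rw [borelAverage, borelAverage, Finset.mul_sum]
  refine Fintype.sum_equiv
    (Equiv.prodShear (Equiv.mulLeft d) fun d' => Equiv.addRight (x * d')) _ _ fun p => ?_
  simp only [Equiv.prodShear_apply, Equiv.coe_mulLeft, Equiv.coe_addRight, mul_assoc,
    borel_one_mul_borel_one, map_mul, Units.val_mul, mul_inv]
  field_simp

lemma borelAverage_mul_of_upper (hf : f ∈ psSpace χ₁ χ₂) {B : GL (Fin 2) E} (hB : B 1 0 = 0)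
    (g : GL (Fin 2) E) : borelAverage χ₂ f (B * g) =
      ofUnitHom χ₁ (B 0 0) * ofUnitHom χ₂ (B 1 1) * borelAverage χ₂ f g := by
  simp only [borelAverage, mul_assoc, apply_mul_of_upper hf hB, Finset.mul_sum]
  exact Finset.sum_congr rfl fun _ _ => by ring

lemma borelAverage_weyl (hf : f ∈ psSpace χ₁ χ₂) (hne : χ₁ ≠ χ₂) :
    borelAverage χ₂ f weyl = 0 := by
  obtain ⟨d, hd⟩ : ∃ d : Eˣ, χ₁ d ≠ χ₂ d := by
    by_contra! h
    exact hne (MonoidHom.ext h)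
  have hcomm : weyl * borel 1 d 0 = borel d 1 0 * weyl := by
    ext i j
    fin_cases i <;> fin_cases j <;> simp [Matrix.mul_apply, Fin.sum_univ_two]
  have key := borelAverage_mul_borel (χ₂ := χ₂) (f := f) weyl d 0
  rw [hcomm, borelAverage_mul_of_upper hf (by simp)] at key
  simp only [coe_borel, of_apply, cons_val', cons_val_zero, cons_val_one, ofUnitHom_coe,
    Units.val_one, map_one, mul_one] at key
  have : ((χ₁ d : ℂˣ) : ℂ) - χ₂ d ≠ 0 := sub_ne_zero.2 fun h => hd (Units.ext h)
  exact (mul_eq_zero.1 (by linear_combination key : _ = (0 : ℂ))).resolve_left this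

lemma borelAverage_of_apply_one_zero_ne_zero (hf : f ∈ psSpace χ₁ χ₂) (hne : χ₁ ≠ χ₂)
    {g : GL (Fin 2) E} (hg : g 1 0 ≠ 0) : borelAverage χ₂ f g = 0 := by
  set y := g 1 1 / g 1 0
  set B := g * borel 1 1 (-y) * weyl
  have hB : B 1 0 = 0 := by
    simp only [B, y, Units.val_mul, coe_borel, Units.val_one, coe_weyl, Matrix.mul_apply,
      of_apply, cons_val', cons_val_fin_one, Fin.sum_univ_two, cons_val_zero, cons_val_one,
      mul_one, mul_zero, add_zero, mul_neg, zero_add]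
    field_simp
    ring
  have hdecomp : g = B * weyl * borel 1 1 y := by
    ext i j
    fin_cases i <;> fin_cases j <;> simp [B, Matrix.mul_apply, Fin.sum_univ_two]
  rw [hdecomp, borelAverage_mul_borel, borelAverage_mul_of_upper hf hB, borelAverage_weyl hf hne,
    mul_zero, mul_zero]

lemma borelAverage_one (hf : f ∈ psSpace χ₁ χ₂) :
    borelAverage χ₂ f 1 = Fintype.card (Eˣ × E) * f 1 := by
  have hterm : ∀ p : Eˣ × E, ((χ₂ p.1 : ℂˣ) : ℂ)⁻¹ * f (1 * borel 1 p.1 p.2) = f 1 := fun p => by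
    rw [one_mul, ← mul_one (borel 1 p.1 p.2), apply_mul_of_upper hf (by simp)]
    simp
  simp only [borelAverage, hterm, Finset.sum_const, Finset.card_univ, nsmul_eq_mul]

lemma sum_smul_psRep_borel (hne : χ₁ ≠ χ₂) (f : psSpace χ₁ χ₂) :
    ∑ p : Eˣ × E, ((χ₂ p.1 : ℂˣ) : ℂ)⁻¹ • psRep χ₁ χ₂ (borel 1 p.1 p.2) f =
      (Fintype.card (Eˣ × E) * (f : GL (Fin 2) E → ℂ) 1) • psBasis χ₁ χ₂ (some 0) := by
  refine (psBasis χ₁ χ₂).ext_elem fun z => ?_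
  rw [psBasis_repr_apply, map_smul, Module.Basis.repr_self, Finsupp.smul_apply,
    Finsupp.single_apply, smul_eq_mul, Submodule.coe_sum, Finset.sum_apply]
  change borelAverage χ₂ f (cosetRep z) = _
  by_cases hz : z = some 0
  · simp [hz, borelAverage_one f.2]
  · rw [borelAverage_of_apply_one_zero_ne_zero f.2 hne (cosetRep_apply_one_zero_ne_zero hz),
      if_neg (Ne.symm hz), mul_zero]

lemma psBasis_mem_of_mem {S : Submodule ℂ (psSpace χ₁ χ₂)}
    (hS : ∀ g : GL (Fin 2) E, ∀ v ∈ S, psRep χ₁ χ₂ g v ∈ S) (h0 : psBasis χ₁ χ₂ (some 0) ∈ S)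
    (z : Option E) : psBasis χ₁ χ₂ z ∈ S := by
  have key := psRep_psBasis_act (χ₁ := χ₁) (χ₂ := χ₂) (cosetRep z)⁻¹ z
  have hact : act z (cosetRep z)⁻¹ = some 0 := by simp [act, linePt]
  have hcoc : cocycle χ₁ χ₂ z (cosetRep z)⁻¹ = 1 := by
    simpa [cocycle] using borelChar_cosetRep (χ₁ := χ₁) (χ₂ := χ₂) (some 0)
  rw [hact, hcoc, one_smul] at key
  exact key ▸ hS _ _ h0

theorem isIrreducibleRep_psRep (hne : χ₁ ≠ χ₂) : IsIrreducibleRep (psRep χ₁ χ₂) := by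
  refine ⟨⟨psBasis χ₁ χ₂ (some 0), 0, (psBasis χ₁ χ₂).ne_zero _⟩, fun S hS => ?_⟩
  refine (eq_or_ne S ⊥).imp id fun hS0 => ?_
  obtain ⟨f, hfS, hf0⟩ := Submodule.exists_mem_ne_zero_of_ne_bot hS0
  obtain ⟨g, hg⟩ : ∃ g, (f : GL (Fin 2) E → ℂ) g ≠ 0 := by
    by_contra! h
    exact hf0 (Subtype.ext (funext h))
  have h0 : psBasis χ₁ χ₂ (some 0) ∈ S := by
    have := S.sum_mem (t := Finset.univ) fun (p : Eˣ × E) _ =>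
      S.smul_mem ((χ₂ p.1 : ℂˣ) : ℂ)⁻¹ (hS (borel 1 p.1 p.2) _ (hS g f hfS))
    rw [sum_smul_psRep_borel hne] at this
    refine (S.smul_mem_iff (mul_ne_zero ?_ ?_)).1 this
    · exact Nat.cast_ne_zero.2 Fintype.card_ne_zero
    · simpa [psRep] using hg
  rw [eq_top_iff, ← (psBasis χ₁ χ₂).span_eq, Submodule.span_le]
  rintro _ ⟨z, rfl⟩
  exact psBasis_mem_of_mem hS h0 z

end Irreducible

theorem principal_series_ok_fails {q : ℕ} (hcard : Fintype.card E = q ^ 2)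
    (σ₀ : E ≃+* E) (hσ₀ : ∀ x : E, σ₀ x = x ^ q)
    (χ₁ χ₂ : Eˣ →* ℂˣ) (hne : χ₁ ≠ χ₂)
    (htriv₁ : ∀ x : Eˣ, σ₀ (x : E) = (x : E) → χ₁ x = 1)
    (htriv₂ : ∀ x : Eˣ, σ₀ (x : E) = (x : E) → χ₂ x = 1) :
    IsIrreducibleRep (psRep χ₁ χ₂) ∧
    Module.finrank ℂ ↥(invariantForms (psRep χ₁ χ₂) (glF σ₀)) = 1 ∧
    Module.finrank ℂ ↥(invariantForms (psRep χ₁ χ₂) (mirabF σ₀)) = 3 ∧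
    invariantForms (psRep χ₁ χ₂) (mirabF σ₀) ≠ invariantForms (psRep χ₁ χ₂) (glF σ₀) := by
  have hσ : Function.Involutive σ₀ := involutive_of_card_eq_sq hcard hσ₀
  obtain ⟨δ, hδ⟩ := exists_pow_ne_self_of_card_eq_sq hcard
  rw [← hσ₀] at hδ
  have hGL : Module.finrank ℂ (invariantForms (psRep χ₁ χ₂) (glF σ₀)) = 1 := by
    rw [finrank_invariantForms, finrank_cocycleInvariants_glF hσ htriv₁ htriv₂ hne]
  have hP : Module.finrank ℂ (invariantForms (psRep χ₁ χ₂) (mirabF σ₀)) = 3 := by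
    rw [finrank_invariantForms, finrank_cocycleInvariants_mirabF hσ htriv₁ htriv₂ hδ]
  refine ⟨isIrreducibleRep_psRep hne, hGL, hP, fun h => ?_⟩
  rw [h, hGL] at hP
  exact absurd hP (by norm_num)

end TestVectors
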